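/- Let C be a category with finite phased coproducts all of whose coprojections are monic, with transitive phases, and with a phase generator I. Then the assignment T_Â := { U : Â → Â | U is a phase of Â in C } is a choice of trivial isomorphisms on GP(C), and the functor [−] : GP(C) → C (sending Â = A +̇ I to A and f to the unique [f] with f ∘ κ_A = κ_B ∘ [f]) induces an equivalence of categories GP(C)/∼ ≃ C. -/

import Mathlib

open CategoryTheory CategoryTheory.Limits

universe v u

variable {C : Type u} [Category.{v} C]

/-- Binary phased coproduct. -/
structure IsPhasedCoproduct₂ (A B P : C) (κA : A ⟶ P) (κB : B ⟶ P) : Prop where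
  lift : ∀ {D : C} (f : A ⟶ D) (g : B ⟶ D), ∃ h : P ⟶ D, κA ≫ h = f ∧ κB ≫ h = g
  phase : ∀ {D : C} (h h' : P ⟶ D), κA ≫ h = κA ≫ h' → κB ≫ h = κB ≫ h' →
    ∃ U : P ⟶ P, (κA ≫ U = κA ∧ κB ≫ U = κB) ∧ h' = U ≫ h

/-- The category has phased coproducts of every pair of objects. -/
def HasPhasedCoproducts₂ (C : Type u) [Category.{v} C] : Prop :=
  ∀ A B : C, ∃ (P : C) (κA : A ⟶ P) (κB : B ⟶ P), IsPhasedCoproduct₂ A B P κA κB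

/-- All coprojections of binary phased coproducts are monic. -/
def MonicPhasedCoproducts (C : Type u) [Category.{v} C] : Prop :=
  ∀ {A B P : C} {κA : A ⟶ P} {κB : B ⟶ P},
    IsPhasedCoproduct₂ A B P κA κB → Mono κA ∧ Mono κB

/-- Transitive phases: diagonal morphisms intertwine phases with phases. -/
def PhasesTransitive (C : Type u) [Category.{v} C] : Prop :=
  ∀ {A B P : C} {κA : A ⟶ P} {κB : B ⟶ P} {A' B' P' : C} {κA' : A' ⟶ P'} {κB' : B' ⟶ P'},
    IsPhasedCoproduct₂ A B P κA κB → IsPhasedCoproduct₂ A' B' P' κA' κB' →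
    ∀ f : P ⟶ P', (∃ g, κA ≫ f = g ≫ κA') → (∃ h, κB ≫ f = h ≫ κB') →
    ∀ U : P ⟶ P, κA ≫ U = κA → κB ≫ U = κB →
    ∃ V : P' ⟶ P', (κA' ≫ V = κA' ∧ κB' ≫ V = κB') ∧ U ≫ f = f ≫ V

/-- Phase generator: codiagonals out of `Gen +̇ Gen` are phase monic, and diagonal
monomorphisms out of `Gen +̇ Gen` are phase epic. -/
structure IsPhaseGenerator (Gen : C) : Prop where
  phaseMonic : ∀ {P : C} {κ₁ κ₂ : Gen ⟶ P}, IsPhasedCoproduct₂ Gen Gen P κ₁ κ₂ →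
    ∀ d : P ⟶ Gen, κ₁ ≫ d = 𝟙 Gen → κ₂ ≫ d = 𝟙 Gen →
    ∀ U V : P ⟶ P, (κ₁ ≫ U = κ₁ ∧ κ₂ ≫ U = κ₂) → (κ₁ ≫ V = κ₁ ∧ κ₂ ≫ V = κ₂) →
      U ≫ d = V ≫ d → U = V
  phaseEpic : ∀ {P : C} {κ₁ κ₂ : Gen ⟶ P}, IsPhasedCoproduct₂ Gen Gen P κ₁ κ₂ →
    ∀ {A B Q : C} {κA : A ⟶ Q} {κB : B ⟶ Q}, IsPhasedCoproduct₂ A B Q κA κB →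
    ∀ m : P ⟶ Q, Mono m → (∃ g, κ₁ ≫ m = g ≫ κA) → (∃ h, κ₂ ≫ m = h ≫ κB) →
    ∀ U V : Q ⟶ Q, (κA ≫ U = κA ∧ κB ≫ U = κB) → (κA ≫ V = κA ∧ κB ≫ V = κB) →
      m ≫ U = m ≫ V → U = V

/-- Objects of the category `GP(C)`: phased coproducts of the form `A +̇ Gen`. -/
structure GPObj (C : Type u) [Category.{v} C] (Gen : C) where
  base : C
  tot : C
  ι : base ⟶ tot
  ιI : Gen ⟶ tot
  isPC : IsPhasedCoproduct₂ base Gen tot ι ιI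

/-- Morphisms of `GP(C)`: morphisms between the totals which preserve the
`Gen`-coprojection and are diagonal. -/
@[ext]
structure GPHom {C : Type u} [Category.{v} C] {Gen : C} (X Y : GPObj C Gen) where
  f : X.tot ⟶ Y.tot
  unit : X.ιI ≫ f = Y.ιI
  diag : ∃ g : X.base ⟶ Y.base, X.ι ≫ f = g ≫ Y.ι

instance {Gen : C} : Category (GPObj C Gen) where
  Hom := GPHom
  id X := ⟨𝟙 X.tot, Category.comp_id _, ⟨𝟙 X.base, by simp⟩⟩
  comp {X Y Z} f g := ⟨f.f ≫ g.f,
    by rw [← Category.assoc, f.unit, g.unit],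
    by
      obtain ⟨u, hu⟩ := f.diag
      obtain ⟨v, hv⟩ := g.diag
      exact ⟨u ≫ v, by rw [← Category.assoc, hu, Category.assoc, hv, ← Category.assoc]⟩⟩
  id_comp f := GPHom.ext (Category.id_comp f.f)
  comp_id f := GPHom.ext (Category.comp_id f.f)
  assoc f g h := GPHom.ext (Category.assoc f.f g.f h.f)

/-- The underlying morphism in `C` of a morphism of `GP(C)`. -/
def GPHom.tot {Gen : C} {X Y : GPObj C Gen} (f : X ⟶ Y) : X.tot ⟶ Y.tot :=
  GPHom.f f

/-- `u` is "the" diagonal component of the `GP(C)`-morphism `f`. -/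
def GPdiag {Gen : C} {X Y : GPObj C Gen} (f : X ⟶ Y) (u : X.base ⟶ Y.base) : Prop :=
  X.ι ≫ GPHom.tot f = u ≫ Y.ι

/-- A `GP(C)`-endomorphism which is a phase in `C`. -/
def GPisPhase {Gen : C} {X : GPObj C Gen} (U : X ⟶ X) : Prop :=
  X.ι ≫ GPHom.tot U = X.ι

/-- A choice of trivial isomorphisms on a category. -/
def IsTrivialIsos {D : Type*} [Category D] (T : ∀ A : D, Subgroup (Aut A)) : Prop :=
  ∀ {A B : D} (f : A ⟶ B), ∀ p ∈ T B, ∃ q ∈ T A, f ≫ p.hom = q.hom ≫ f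

/-- The congruence on `GP(C)` identifying morphisms differing by a phase:
`f ∼ g` iff `f = g ∘ U` for some phase `U`. -/
def GPphaseRel (C : Type u) [Category.{v} C] (Gen : C) : HomRel (GPObj C Gen) :=
  fun {X _} f g => ∃ U : X ⟶ X, GPisPhase U ∧ f = U ≫ g

/-!
A morphism `f : A +̇ Gen → B +̇ Gen` of `GP(C)` is pinned on `κ_Gen`, and since `κ_B` is monic
its component `[f] : A → B` is unique. Two such morphisms with the same component agree on both
coprojections, so by the second phased-coproduct axiom they differ by a phase of the source:
this makes `[−]` well defined and faithful on `GP(C)/∼`, and also shows that pulling a phase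
back along any `f` gives a phase, i.e. that phases are trivial isomorphisms. Fullness is the
first axiom applied to `κ_B ∘ g` and `κ_Gen`, and essential surjectivity is the existence of
`A +̇ Gen`.
-/

namespace IsPhasedCoproduct₂

variable {A B P : C} {κA : A ⟶ P} {κB : B ⟶ P}

lemma exists_phase_inverse (h : IsPhasedCoproduct₂ A B P κA κB) {U : P ⟶ P}
    (hA : κA ≫ U = κA) (hB : κB ≫ U = κB) :
    ∃ W : P ⟶ P, (κA ≫ W = κA ∧ κB ≫ W = κB) ∧ U ≫ W = 𝟙 P ∧ W ≫ U = 𝟙 P := by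
  obtain ⟨W, ⟨hWA, hWB⟩, hWU⟩ := h.phase U (𝟙 P) (by simp [hA]) (by simp [hB])
  obtain ⟨W', -, hW'W⟩ := h.phase W (𝟙 P) (by simp [hWA]) (by simp [hWB])
  -- `W` has both a left inverse `U` and a right inverse `W'`, so they coincide
  have hW' : W' = U := by
    calc W' = W' ≫ W ≫ U := by rw [← hWU, Category.comp_id]
      _ = U := by rw [← Category.assoc, ← hW'W, Category.id_comp]
  exact ⟨W, ⟨hWA, hWB⟩, hW' ▸ hW'W.symm, hWU.symm⟩

end IsPhasedCoproduct₂

namespace GPHom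

variable {Gen : C}

@[simp] lemma comp_f {X Y Z : GPObj C Gen} (f : X ⟶ Y) (g : Y ⟶ Z) :
    (f ≫ g).f = f.f ≫ g.f := rfl

@[simp] lemma id_f (X : GPObj C Gen) : (𝟙 X : X ⟶ X).f = 𝟙 X.tot := rfl

/-- The diagonal component `[f]`. -/
noncomputable def base {X Y : GPObj C Gen} (f : X ⟶ Y) : X.base ⟶ Y.base :=
  f.diag.choose

lemma ι_comp_f {X Y : GPObj C Gen} (f : X ⟶ Y) : X.ι ≫ f.f = f.base ≫ Y.ι :=
  f.diag.choose_spec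

lemma base_eq (hmono : MonicPhasedCoproducts C) {X Y : GPObj C Gen} (f : X ⟶ Y)
    {u : X.base ⟶ Y.base} (hu : X.ι ≫ f.f = u ≫ Y.ι) : f.base = u :=
  have := (hmono Y.isPC).1
  (cancel_mono Y.ι).1 (f.ι_comp_f.symm.trans hu)

lemma base_eq_base_iff (hmono : MonicPhasedCoproducts C) {X Y : GPObj C Gen}
    (f g : X ⟶ Y) : f.base = g.base ↔ X.ι ≫ f.f = X.ι ≫ g.f := by
  have := (hmono Y.isPC).1
  rw [ι_comp_f, ι_comp_f, cancel_mono]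

end GPHom

namespace GPObj

variable {Gen : C} (X : GPObj C Gen)

def phaseHom {U : X.tot ⟶ X.tot} (hA : X.ι ≫ U = X.ι) (hI : X.ιI ≫ U = X.ιI) : X ⟶ X :=
  ⟨U, hI, 𝟙 _, by rw [hA, Category.id_comp]⟩

lemma exists_phase_eq_comp {Y : GPObj C Gen} (f g : X ⟶ Y) (h : X.ι ≫ f.f = X.ι ≫ g.f) :
    ∃ U : X ⟶ X, GPisPhase U ∧ g = U ≫ f := by
  obtain ⟨U, ⟨hA, hI⟩, hU⟩ := X.isPC.phase f.f g.f h (by rw [f.unit, g.unit])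
  exact ⟨X.phaseHom hA hI, hA, GPHom.ext hU⟩

lemma exists_aut_of_phase {U : X.tot ⟶ X.tot} (hA : X.ι ≫ U = X.ι) (hI : X.ιI ≫ U = X.ιI) :
    ∃ u : Aut X, u.hom = X.phaseHom hA hI := by
  obtain ⟨W, ⟨hWA, hWI⟩, hUW, hWU⟩ := X.isPC.exists_phase_inverse hA hI
  exact ⟨⟨X.phaseHom hA hI, X.phaseHom hWA hWI, GPHom.ext hUW, GPHom.ext hWU⟩, rfl⟩

def phases : Subgroup (Aut X) where
  carrier := {u | GPisPhase u.hom}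
  one_mem' := Category.comp_id X.ι
  mul_mem' {a b} (ha : X.ι ≫ a.hom.f = X.ι) (hb : X.ι ≫ b.hom.f = X.ι) :=
    show X.ι ≫ b.hom.f ≫ a.hom.f = X.ι by rw [← Category.assoc, hb, ha]
  inv_mem' {a} (ha : X.ι ≫ a.hom.f = X.ι) :=
    show X.ι ≫ a.inv.f = X.ι by
      conv_lhs => rw [← ha, Category.assoc, ← GPHom.comp_f, a.hom_inv_id, GPHom.id_f,
        Category.comp_id]

end GPObj

variable {Gen : C}

theorem isTrivialIsos_phases : IsTrivialIsos (GPObj.phases (Gen := Gen)) := by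
  intro X Y f p (hp : Y.ι ≫ p.hom.f = Y.ι)
  have hfp : X.ι ≫ f.f = X.ι ≫ (f ≫ p.hom).f := by
    rw [GPHom.comp_f, ← Category.assoc, f.ι_comp_f, Category.assoc, hp]
  obtain ⟨U, ⟨hA, hI⟩, hU⟩ := X.isPC.phase _ _ hfp (by rw [f.unit, (f ≫ p.hom).unit])
  obtain ⟨q, hq⟩ := X.exists_aut_of_phase hA hI
  exact ⟨q, show GPisPhase q.hom by rw [hq]; exact hA, GPHom.ext (by rw [hq]; exact hU)⟩

/-- The functor `[−] : GP(C) ⥤ C`. -/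
noncomputable def GPObj.baseFunctor (hmono : MonicPhasedCoproducts C) : GPObj C Gen ⥤ C where
  obj X := X.base
  map f := f.base
  map_id X := GPHom.base_eq hmono (𝟙 X) (by simp)
  map_comp f g := GPHom.base_eq hmono (f ≫ g) (by
    rw [GPHom.comp_f, ← Category.assoc, f.ι_comp_f, Category.assoc, g.ι_comp_f,
      Category.assoc])

namespace GPObj

lemma baseFunctor_map_eq_of_phaseRel (hmono : MonicPhasedCoproducts C) {X Y : GPObj C Gen}
    {f g : X ⟶ Y} (h : GPphaseRel C Gen f g) :
    (baseFunctor hmono).map f = (baseFunctor hmono).map g := by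
  obtain ⟨U, hU : X.ι ≫ U.f = X.ι, rfl⟩ := h
  change (U ≫ g).base = g.base
  rw [GPHom.base_eq_base_iff hmono, GPHom.comp_f, ← Category.assoc, hU]

noncomputable def quotientBaseFunctor (hmono : MonicPhasedCoproducts C) :
    CategoryTheory.Quotient (GPphaseRel C Gen) ⥤ C :=
  CategoryTheory.Quotient.lift _ (baseFunctor hmono) fun _ _ _ _ =>
    baseFunctor_map_eq_of_phaseRel hmono

instance faithful_quotientBaseFunctor (hmono : MonicPhasedCoproducts C) :
    (quotientBaseFunctor (Gen := Gen) hmono).Faithful where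
  map_injective {X Y} f g hfg := by
    obtain ⟨f, rfl⟩ := (CategoryTheory.Quotient.functor (GPphaseRel C Gen)).map_surjective f
    obtain ⟨g, rfl⟩ := (CategoryTheory.Quotient.functor (GPphaseRel C Gen)).map_surjective g
    replace hfg : f.base = g.base := hfg
    rw [GPHom.base_eq_base_iff hmono] at hfg
    exact CategoryTheory.Quotient.sound _ (X.as.exists_phase_eq_comp g f hfg.symm)

instance full_quotientBaseFunctor (hmono : MonicPhasedCoproducts C) :
    (quotientBaseFunctor (Gen := Gen) hmono).Full where
  map_surjective {X Y} u := by
    obtain ⟨h, hA, hI⟩ := X.as.isPC.lift (u ≫ Y.as.ι) Y.as.ιI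
    exact ⟨(CategoryTheory.Quotient.functor _).map ⟨h, hI, u, hA⟩, GPHom.base_eq hmono _ hA⟩

lemma essSurj_quotientBaseFunctor (hmono : MonicPhasedCoproducts C)
    (hcop : HasPhasedCoproducts₂ C) : (quotientBaseFunctor (Gen := Gen) hmono).EssSurj where
  mem_essImage A := by
    obtain ⟨P, κA, κI, hP⟩ := hcop A Gen
    exact ⟨(CategoryTheory.Quotient.functor _).obj ⟨A, P, κA, κI, hP⟩, ⟨Iso.refl A⟩⟩

end GPObj

theorem stmt_9_general (Gen : C)
    (hcop : HasPhasedCoproducts₂ C)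
    (hmono : MonicPhasedCoproducts C) :
    (∃ T : ∀ X : GPObj C Gen, Subgroup (Aut X),
      (∀ (X : GPObj C Gen) (u : Aut X), u ∈ T X ↔ GPisPhase u.hom) ∧
      IsTrivialIsos T) ∧
    (∃ (F : Quotient (GPphaseRel C Gen) ⥤ C)
       (hobj : ∀ X : GPObj C Gen,
         F.obj ((Quotient.functor (GPphaseRel C Gen)).obj X) = X.base),
      (∀ (X Y : GPObj C Gen) (f : X ⟶ Y),
        GPdiag f (eqToHom (hobj X).symm ≫
          F.map ((Quotient.functor (GPphaseRel C Gen)).map f) ≫ eqToHom (hobj Y))) ∧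
      F.IsEquivalence) := by
  have := GPObj.essSurj_quotientBaseFunctor (Gen := Gen) hmono hcop
  refine ⟨⟨GPObj.phases, fun _ _ => Iff.rfl, isTrivialIsos_phases⟩,
    GPObj.quotientBaseFunctor hmono, fun _ => rfl, fun X Y f => ?_, { }⟩
  change X.ι ≫ f.f = (𝟙 _ ≫ f.base ≫ 𝟙 _) ≫ Y.ι
  simpa using f.ι_comp_f

/-- the phases form a choice of trivial isomorphisms on `GP(C)`, and the
functor `[−] : GP(C) ⥤ C` (sending `A +̇ Gen` to `A` and a morphism to its diagonal
component) induces an equivalence `GP(C)/∼ ≌ C`. -/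
theorem stmt_9 (Gen : C)
    (hcop : HasPhasedCoproducts₂ C) (hinit : HasInitial C)
    (hmono : MonicPhasedCoproducts C) (htrans : PhasesTransitive C)
    (hgen : IsPhaseGenerator Gen) :
    (∃ T : ∀ X : GPObj C Gen, Subgroup (Aut X),
      (∀ (X : GPObj C Gen) (u : Aut X), u ∈ T X ↔ GPisPhase u.hom) ∧
      IsTrivialIsos T) ∧
    (∃ (F : Quotient (GPphaseRel C Gen) ⥤ C)
       (hobj : ∀ X : GPObj C Gen,
         F.obj ((Quotient.functor (GPphaseRel C Gen)).obj X) = X.base),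
      (∀ (X Y : GPObj C Gen) (f : X ⟶ Y),
        GPdiag f (eqToHom (hobj X).symm ≫
          F.map ((Quotient.functor (GPphaseRel C Gen)).map f) ≫ eqToHom (hobj Y))) ∧
      F.IsEquivalence) :=
  stmt_9_general Gen hcop hmono
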